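/- arXiv:1811.03432 — 2 statements merged into one kernel-verified Lean document; each statement's English description precedes it below -/
import Mathlib

section
/- Let G be a planar graph with vertex set V and let S ⊆ V. Suppose that for every finite set X₀ of points on the y-axis with |X₀| = |S| there is a plane straight-line drawing of G mapping S bijectively onto X₀, and suppose moreover that the set of vertex-position assignments giving plane straight-line drawings of G is open in (ℝ²)^V. Then for every set X of |S| points in the plane with pairwise distinct y-coordinates, there is a plane straight-line drawing of G mapping S onto X. -/
open Set

/-- A straight-line drawing `ρ` of a graph `G` is plane if it is injective and any
two edge segments intersect only in images of shared endpoints. -/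
def IsPlaneDrawing {V : Type*} (G : SimpleGraph V) (ρ : V → ℝ × ℝ) : Prop :=
  Function.Injective ρ ∧
    ∀ u v x y : V, G.Adj u v → G.Adj x y →
      segment ℝ (ρ u) (ρ v) ∩ segment ℝ (ρ x) (ρ y) ⊆ ρ '' ({u, v} ∩ {x, y} : Set V)

/-- Composing a plane drawing with an injective linear map gives a plane drawing. -/
lemma IsPlaneDrawing.linear_comp {V : Type*} {G : SimpleGraph V} {ρ : V → ℝ × ℝ}
    (f : (ℝ × ℝ) →ₗ[ℝ] (ℝ × ℝ)) (hf : Function.Injective f)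
    (h : IsPlaneDrawing G ρ) : IsPlaneDrawing G (f ∘ ρ) := by
  obtain ⟨hinj, hseg⟩ := h
  refine ⟨hf.comp hinj, fun u v x y huv hxy => ?_⟩
  have him : ∀ a b : ℝ × ℝ, segment ℝ (f a) (f b) = f '' segment ℝ a b := by
    intro a b
    have := image_segment ℝ f.toAffineMap a b
    simpa using this.symm
  calc segment ℝ ((f ∘ ρ) u) ((f ∘ ρ) v) ∩ segment ℝ ((f ∘ ρ) x) ((f ∘ ρ) y)
      = f '' (segment ℝ (ρ u) (ρ v) ∩ segment ℝ (ρ x) (ρ y)) := by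
        simp only [Function.comp_apply, him, Set.image_inter hf]
    _ ⊆ f '' (ρ '' ({u, v} ∩ {x, y} : Set V)) :=
        Set.image_mono (hseg u v x y huv hxy)
    _ = (f ∘ ρ) '' ({u, v} ∩ {x, y} : Set V) := (Set.image_comp f ρ _).symm

/-- If a planar graph `G` has, for every finite set `X₀` of points on the y-axis of
the right cardinality, a plane straight-line drawing mapping `S` bijectively onto
`X₀`, and the set of plane straight-line drawings of `G` is open, then for every set
`X` of `|S|` points with pairwise distinct y-coordinates there is a plane
straight-line drawing of `G` mapping `S` onto `X`. -/
theorem free_collinear_implies_free {V : Type*} [Fintype V]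
    (G : SimpleGraph V) (S : Set V)
    (hcoll : ∀ X₀ : Set (ℝ × ℝ), X₀.Finite → (∀ p ∈ X₀, p.1 = 0) →
      X₀.ncard = S.ncard → ∃ ρ : V → ℝ × ℝ, IsPlaneDrawing G ρ ∧ Set.BijOn ρ S X₀)
    (hopen : IsOpen {ρ : V → ℝ × ℝ | IsPlaneDrawing G ρ})
    (X : Set (ℝ × ℝ)) (hXfin : X.Finite) (hcard : X.ncard = S.ncard)
    (hy : ∀ p ∈ X, ∀ q ∈ X, p ≠ q → p.2 ≠ q.2) :
    ∃ ρ : V → ℝ × ℝ, IsPlaneDrawing G ρ ∧ Set.BijOn ρ S X := by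
  classical
  -- the projection onto the y-axis
  set π : ℝ × ℝ → ℝ × ℝ := fun p => ((0 : ℝ), p.2) with hπ
  have hinjπ : Set.InjOn π X := by
    intro p hp q hq h
    by_contra hne
    exact hy p hp q hq hne (by simpa [hπ, Prod.ext_iff] using h)
  -- the collinear point set
  set X₀ : Set (ℝ × ℝ) := π '' X with hX₀
  have hfin₀ : X₀.Finite := hXfin.image π
  have hax₀ : ∀ p ∈ X₀, p.1 = 0 := by
    rintro p ⟨q, -, rfl⟩; rfl
  have hcard₀ : X₀.ncard = S.ncard := by
    rw [hX₀, Set.ncard_image_of_injOn hinjπ, hcard]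
  obtain ⟨ρ, hplane, hbij⟩ := hcoll X₀ hfin₀ hax₀ hcard₀
  -- pull back points of `X₀` to `X`
  set ψ : V → ℝ × ℝ := fun v => Function.invFunOn π X (ρ v) with hψ
  have hmemX : ∀ s ∈ S, ∃ a ∈ X, π a = ρ s := by
    intro s hs
    obtain ⟨a, ha, haeq⟩ := hbij.mapsTo hs
    exact ⟨a, ha, haeq⟩
  have hψmem : ∀ s ∈ S, ψ s ∈ X := fun s hs =>
    Function.invFunOn_mem (hmemX s hs)
  have hπψ : ∀ s ∈ S, π (ψ s) = ρ s := fun s hs =>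
    Function.invFunOn_eq (hmemX s hs)
  have hbijψ : Set.BijOn ψ S X := by
    refine ⟨fun s hs => hψmem s hs, ?_, ?_⟩
    · intro s hs t ht h
      apply hplane.1
      rw [← hπψ s hs, ← hπψ t ht, h]
    · intro x hx
      obtain ⟨s, hs, hρs⟩ := hbij.surjOn ⟨x, hx, rfl⟩
      refine ⟨s, hs, ?_⟩
      have : π (ψ s) = π x := by rw [hπψ s hs, hρs]
      exact hinjπ (hψmem s hs) hx this
  -- the perturbation direction
  set c : V → ℝ × ℝ := fun v => if v ∈ S then ((ψ v).1, (0 : ℝ)) else 0 with hc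
  set F : ℝ → (V → ℝ × ℝ) := fun ε v => ρ v + ε • c v with hF
  have hFcont : Continuous F := by
    refine continuous_pi fun v => ?_
    exact continuous_const.add (continuous_id.smul continuous_const)
  have hF0 : F 0 = ρ := by
    funext v; simp [hF]
  have hpre : IsOpen (F ⁻¹' {ρ' : V → ℝ × ℝ | IsPlaneDrawing G ρ'}) :=
    hopen.preimage hFcont
  have h0mem : (0 : ℝ) ∈ F ⁻¹' {ρ' : V → ℝ × ℝ | IsPlaneDrawing G ρ'} := by
    simp only [Set.mem_preimage, hF0]; exact hplane
  obtain ⟨δ, hδpos, hball⟩ := Metric.isOpen_iff.mp hpre 0 h0mem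
  set ε : ℝ := δ / 2 with hεdef
  have hεpos : 0 < ε := by positivity
  have hεne : ε ≠ 0 := ne_of_gt hεpos
  have hεmem : ε ∈ Metric.ball (0 : ℝ) δ := by
    simp only [Metric.mem_ball, dist_zero_right, Real.norm_eq_abs]
    rw [abs_of_pos hεpos, hεdef]; linarith
  have hFε : IsPlaneDrawing G (F ε) := hball hεmem
  -- the rescaling linear map
  set L : (ℝ × ℝ) →ₗ[ℝ] (ℝ × ℝ) :=
    LinearMap.prod (ε⁻¹ • LinearMap.fst ℝ ℝ ℝ) (LinearMap.snd ℝ ℝ ℝ) with hL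
  have hLapp : ∀ p : ℝ × ℝ, L p = (ε⁻¹ * p.1, p.2) := by
    intro p; simp [hL]
  have hLinj : Function.Injective L := by
    intro a b h
    rw [hLapp, hLapp, Prod.ext_iff] at h
    exact Prod.ext (mul_left_cancel₀ (inv_ne_zero hεne) h.1) h.2
  refine ⟨L ∘ F ε, hFε.linear_comp L hLinj, ?_⟩
  have hEq : Set.EqOn ψ (L ∘ F ε) S := by
    intro s hs
    have hρs : ρ s = ((0 : ℝ), (ψ s).2) := by
      rw [← hπψ s hs]
    simp only [Function.comp_apply, hF, hLapp, hρs, hc, if_pos hs,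
      Prod.smul_mk, smul_eq_mul, Prod.mk_add_mk, mul_zero, add_zero, zero_add]
    rw [← mul_assoc, inv_mul_cancel₀ hεne, one_mul]
  exact hbijψ.congr hEq
end

section
/- Let q = (v, a, b, c) be a quadrilateral in the plane (vertices in this cyclic order, forming a simple closed polygon) such that the four sides va, ab, bc, cv each cross the y-axis in exactly one interior point, and v lies strictly to the left of the y-axis (v_x < 0) while its neighbors a and c lie strictly to the right. Then v is a reflex vertex of q or the quadrilateral is non-convex; in particular, a quadrilateral all of whose edges cross a common line cannot be convex. -/
/-!
Four points of the plane are affinely dependent, so by Radon's theorem they split into two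
parts whose convex hulls meet. A split into one point and three puts a vertex in the triangle
of the other three. Of the three splits into two pairs, the two pairs of opposite sides are
excluded because the quadrilateral is simple, and the diagonals `vb` and `ac` lie in opposite
open halfplanes, so they do not meet either.
-/

open Set

theorem not_affineIndependent_of_finrank_le {k V : Type*} [DivisionRing k] [AddCommGroup V]
    [Module k V] [FiniteDimensional k V] {n : ℕ} (hV : Module.finrank k V ≤ n)
    (f : Fin (n + 2) → V) : ¬ AffineIndependent k f :=
  (finrank_vectorSpan_le_iff_not_affineIndependent k f (Fintype.card_fin _)).1
    ((Submodule.finrank_le _).trans hV)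

section

variable {𝕜 E : Type*} [Field 𝕜] [LinearOrder 𝕜] [IsStrictOrderedRing 𝕜]
  [AddCommGroup E] [Module 𝕜 E]

theorem disjoint_segment_of_separated (f : E →ₗ[𝕜] 𝕜) {t : 𝕜} {v b a c : E}
    (hv : f v < t) (hb : f b < t) (ha : t < f a) (hc : t < f c) :
    Disjoint (segment 𝕜 v b) (segment 𝕜 a c) := by
  have hlt : segment 𝕜 v b ⊆ {w | f w < t} :=
    (convex_halfSpace_lt f.isLinear t).segment_subset hv hb
  have hgt : segment 𝕜 a c ⊆ {w | t < f w} :=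
    (convex_halfSpace_gt f.isLinear t).segment_subset ha hc
  exact (disjoint_left.2 fun _ h₁ h₂ => lt_asymm h₁ h₂).mono hlt hgt

theorem radon_four_points [FiniteDimensional 𝕜 E] (hE : Module.finrank 𝕜 E ≤ 2) (p q r s : E) :
    p ∈ convexHull 𝕜 {q, r, s} ∨ q ∈ convexHull 𝕜 {p, r, s} ∨ r ∈ convexHull 𝕜 {p, q, s} ∨
      s ∈ convexHull 𝕜 {p, q, r} ∨ (segment 𝕜 p q ∩ segment 𝕜 r s).Nonempty ∨
      (segment 𝕜 p r ∩ segment 𝕜 q s).Nonempty ∨ (segment 𝕜 p s ∩ segment 𝕜 q r).Nonempty := by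
  obtain ⟨I, hx⟩ := Convex.radon_partition (not_affineIndependent_of_finrank_le hE ![p, q, r, s])
  wlog m0 : 0 ∈ I generalizing I
  · exact this Iᶜ (by rwa [compl_compl, inter_comm]) m0
  by_cases m1 : (1 : Fin 4) ∈ I <;> by_cases m2 : (2 : Fin 4) ∈ I <;>
    by_cases m3 : (3 : Fin 4) ∈ I <;>
    -- a plain `simp` lists the triangles' vertices in another order, which `tauto` cannot match
    simp only [image, Fin.exists_fin_succ, Fin.isValue, m0, m1, m2, m3, mem_compl_iff,
      Matrix.cons_val_zero, Matrix.cons_val_succ, Fin.succ_zero_eq_one, Fin.succ_one_eq_two,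
      Matrix.cons_val_fin_one, Fin.reduceSucc, IsEmpty.exists_iff, exists_and_right, true_and,
      false_and, or_false, false_or, or_self, not_true_eq_false, not_false_eq_true, ofPred_or,
      ofPred_false, ofPred_eq_eq_singleton', singleton_union, convexHull_empty,
      convexHull_singleton, convexHull_pair, inter_empty, Set.not_nonempty_empty,
      singleton_inter_nonempty, inter_singleton_nonempty] at hx <;>
    tauto

end

theorem alternating_quadrilateral_nonconvex_general (v a b c : ℝ × ℝ)
    (hv : v.1 < 0) (hb : b.1 < 0) (ha : 0 < a.1) (hc : 0 < c.1)
    (h₅ : segment ℝ v a ∩ segment ℝ b c = ∅)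
    (h₆ : segment ℝ a b ∩ segment ℝ c v = ∅) :
    v ∈ convexHull ℝ ({a, b, c} : Set (ℝ × ℝ)) ∨
      a ∈ convexHull ℝ ({v, b, c} : Set (ℝ × ℝ)) ∨
      b ∈ convexHull ℝ ({v, a, c} : Set (ℝ × ℝ)) ∨
      c ∈ convexHull ℝ ({v, a, b} : Set (ℝ × ℝ)) := by
  have diagonals : segment ℝ v b ∩ segment ℝ a c = ∅ :=
    (disjoint_segment_of_separated (LinearMap.fst ℝ ℝ ℝ) hv hb ha hc).inter_eq
  have radon := radon_four_points (𝕜 := ℝ) (by simp [Module.finrank_prod]) v a b c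
  simp only [h₅, diagonals, segment_symm ℝ v c, inter_comm (segment ℝ c v), h₆,
    Set.not_nonempty_empty, or_false] at radon
  exact radon

/-- A simple quadrilateral `v a b c` (in this cyclic order) whose vertices alternate
strictly between the two open halfplanes determined by the y-axis (`v`, `b` on the
left; `a`, `c` on the right; so each side crosses the axis) is non-convex: some
vertex lies in the convex hull of the other three. -/
theorem alternating_quadrilateral_nonconvex (v a b c : ℝ × ℝ)
    (hv : v.1 < 0) (hb : b.1 < 0) (ha : 0 < a.1) (hc : 0 < c.1)
    -- the quadrilateral is simple: consecutive sides meet only at their shared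
    -- vertex and opposite sides are disjoint
    (h₁ : segment ℝ v a ∩ segment ℝ a b = {a})
    (h₂ : segment ℝ a b ∩ segment ℝ b c = {b})
    (h₃ : segment ℝ b c ∩ segment ℝ c v = {c})
    (h₄ : segment ℝ c v ∩ segment ℝ v a = {v})
    (h₅ : segment ℝ v a ∩ segment ℝ b c = ∅)
    (h₆ : segment ℝ a b ∩ segment ℝ c v = ∅) :
    v ∈ convexHull ℝ ({a, b, c} : Set (ℝ × ℝ)) ∨
      a ∈ convexHull ℝ ({v, b, c} : Set (ℝ × ℝ)) ∨
      b ∈ convexHull ℝ ({v, a, c} : Set (ℝ × ℝ)) ∨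
      c ∈ convexHull ℝ ({v, a, b} : Set (ℝ × ℝ)) :=
  alternating_quadrilateral_nonconvex_general v a b c hv hb ha hc h₅ h₆
end
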